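/- Uniqueness for the abstract wave equation: if ω : ℝ → L is twice continuously differentiable, ω(t) ∈ D(Δ) for all t, ω'' + Δω = 0, and ω(0) = ω'(0) = 0, then ω(t) = 0 for all t. -/
import Mathlib


open MeasureTheory Complex Set
open scoped InnerProductSpace ENNReal

noncomputable section

/-- A possibly unbounded operator is nonnegative: `⟪Tx, x⟫ ≥ 0` for `x` in its domain. -/
def PMapNonneg {H : Type*} [NormedAddCommGroup H] [InnerProductSpace ℂ H]
    (T : H →ₗ.[ℂ] H) : Prop :=
  ∀ x : T.domain, 0 ≤ (⟪T x, (x : H)⟫_ℂ).re ∧ (⟪T x, (x : H)⟫_ℂ).im = 0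

end

noncomputable section

/-- Symmetry of a self-adjoint partially defined operator. -/
theorem stmt15_sym {L : Type*} [NormedAddCommGroup L] [InnerProductSpace ℂ L] [CompleteSpace L]
    (Δ : L →ₗ.[ℂ] L) (hsa : IsSelfAdjoint Δ) :
    ∀ x y : Δ.domain, ⟪Δ x, (y : L)⟫_ℂ = ⟪(x : L), Δ y⟫_ℂ := by
  have hd := hsa.dense_domain
  have h := LinearPMap.adjoint_isFormalAdjoint hd
  rw [LinearPMap.isSelfAdjoint_def] at hsa
  rw [hsa] at h
  exact h

/-- Uniqueness for the abstract wave equation: a twice continuously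
differentiable solution of `ω'' + Δω = 0` with `ω(0) = ω'(0) = 0` vanishes identically. -/
theorem stmt15 {L : Type*} [NormedAddCommGroup L] [InnerProductSpace ℂ L] [CompleteSpace L]
    (Δ : L →ₗ.[ℂ] L)
    (hsa : IsSelfAdjoint Δ) (hnn : PMapNonneg Δ)
    (ω ω' ω'' : ℝ → L)
    (hdom : ∀ t, ω t ∈ Δ.domain)
    (hd1 : ∀ t, HasDerivAt ω (ω' t) t) (hd2 : ∀ t, HasDerivAt ω' (ω'' t) t)
    (hcont : Continuous ω'')
    (heq : ∀ t, ω'' t + Δ ⟨ω t, hdom t⟩ = 0)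
    (h0 : ω 0 = 0) (h0' : ω' 0 = 0) :
    ∀ t, ω t = 0 := by
  have hsym := stmt15_sym Δ hsa
  set u : ℝ → Δ.domain := fun t => ⟨ω t, hdom t⟩ with hu
  have hA : ∀ t, Δ (u t) = -(ω'' t) := fun t => eq_neg_of_add_eq_zero_right (heq t)
  set A : ℝ → L := fun t => -(ω'' t) with hAdef
  have hAcont : Continuous A := hcont.neg
  -- the potential energy
  set g : ℝ → ℝ := fun t => (⟪Δ (u t), ω t⟫_ℂ).re with hgdef
  -- derivative of the potential energy, via symmetry of Δ
  have hg : ∀ t, HasDerivAt g (2 * (⟪A t, ω' t⟫_ℂ).re) t := by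
    intro t
    rw [hasDerivAt_iff_tendsto_slope]
    have hq : Filter.Tendsto (slope ω t) (nhdsWithin t {t}ᶜ) (nhds (ω' t)) :=
      hasDerivAt_iff_tendsto_slope.mp (hd1 t)
    have hAt : Filter.Tendsto A (nhdsWithin t {t}ᶜ) (nhds (A t)) :=
      (hAcont.tendsto t).mono_left nhdsWithin_le_nhds
    have hlim : Filter.Tendsto
        (fun y => (⟪slope ω t y, A y⟫_ℂ).re + (⟪A t, slope ω t y⟫_ℂ).re)
        (nhdsWithin t {t}ᶜ) (nhds ((⟪ω' t, A t⟫_ℂ).re + (⟪A t, ω' t⟫_ℂ).re)) := by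
      have h1 : Filter.Tendsto (fun y => ⟪slope ω t y, A y⟫_ℂ)
          (nhdsWithin t {t}ᶜ) (nhds (⟪ω' t, A t⟫_ℂ)) := hq.inner hAt
      have h2 : Filter.Tendsto (fun y => ⟪A t, slope ω t y⟫_ℂ)
          (nhdsWithin t {t}ᶜ) (nhds (⟪A t, ω' t⟫_ℂ)) := Filter.Tendsto.inner tendsto_const_nhds hq
      exact ((Complex.continuous_re.tendsto _).comp h1).add
        ((Complex.continuous_re.tendsto _).comp h2)
    have heqv : ∀ y ∈ ({t}ᶜ : Set ℝ), slope g t y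
        = (⟪slope ω t y, A y⟫_ℂ).re + (⟪A t, slope ω t y⟫_ℂ).re := by
      intro y hy
      have hyt : y ≠ t := hy
      -- complex identity
      have hC : ⟪Δ (u y), ω y⟫_ℂ - ⟪Δ (u t), ω t⟫_ℂ
          = ⟪ω y - ω t, A y⟫_ℂ + ⟪A t, ω y - ω t⟫_ℂ := by
        have e1 : Δ (u y) - Δ (u t) = Δ (u y - u t) := (Δ.map_sub _ _).symm
        have e2 : ⟪Δ (u y - u t), ((u y : L))⟫_ℂ = ⟪((u y - u t : Δ.domain) : L), Δ (u y)⟫_ℂ :=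
          hsym _ _
        have e3 : ((u y - u t : Δ.domain) : L) = ω y - ω t := rfl
        calc ⟪Δ (u y), ω y⟫_ℂ - ⟪Δ (u t), ω t⟫_ℂ
            = ⟪Δ (u y) - Δ (u t), ω y⟫_ℂ + ⟪Δ (u t), ω y - ω t⟫_ℂ := by
              rw [inner_sub_left, inner_sub_right]; ring
          _ = ⟪ω y - ω t, Δ (u y)⟫_ℂ + ⟪Δ (u t), ω y - ω t⟫_ℂ := by
              rw [e1]
              rw [show ⟪Δ (u y - u t), ω y⟫_ℂ = ⟪Δ (u y - u t), ((u y : L))⟫_ℂ from rfl, e2, e3]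
          _ = ⟪ω y - ω t, A y⟫_ℂ + ⟪A t, ω y - ω t⟫_ℂ := by rw [hA, hA]
      have hgsub : g y - g t = (⟪ω y - ω t, A y⟫_ℂ + ⟪A t, ω y - ω t⟫_ℂ).re := by
        simp only [hgdef, ← Complex.sub_re, hC]
      rw [slope_def_field, slope_def_module, div_eq_inv_mul, hgsub]
      have h1 : ((y - t)⁻¹ • (ω y - ω t)) = (((y - t)⁻¹ : ℝ) : ℂ) • (ω y - ω t) :=
        RCLike.real_smul_eq_coe_smul (K := ℂ) _ _
      rw [h1, inner_smul_left, inner_smul_right, Complex.conj_ofReal]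
      simp only [Complex.add_re, Complex.mul_re, Complex.ofReal_re, Complex.ofReal_im]
      ring
    have hfin : Filter.Tendsto (slope g t) (nhdsWithin t {t}ᶜ)
        (nhds ((⟪ω' t, A t⟫_ℂ).re + (⟪A t, ω' t⟫_ℂ).re)) :=
      hlim.congr' ((eventually_mem_nhdsWithin).mono fun y hy => (heqv y hy).symm)
    have : (⟪ω' t, A t⟫_ℂ).re + (⟪A t, ω' t⟫_ℂ).re = 2 * (⟪A t, ω' t⟫_ℂ).re := by
      rw [← inner_conj_symm (A t) (ω' t), Complex.conj_re]; ring
    rwa [this] at hfin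
  -- kinetic energy
  set n : ℝ → ℝ := fun t => (⟪ω' t, ω' t⟫_ℂ).re with hndef
  have hn : ∀ t, HasDerivAt n (2 * (⟪ω'' t, ω' t⟫_ℂ).re) t := by
    intro t
    have h := HasDerivAt.inner ℂ (hd2 t) (hd2 t)
    have h2 := Complex.reCLM.hasFDerivAt.comp_hasDerivAt t h
    have : (Complex.reCLM (⟪ω' t, ω'' t⟫_ℂ + ⟪ω'' t, ω' t⟫_ℂ)) = 2 * (⟪ω'' t, ω' t⟫_ℂ).re := by
      simp only [Complex.reCLM_apply, Complex.add_re]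
      rw [← inner_conj_symm (ω'' t) (ω' t), Complex.conj_re]; ring
    rwa [this] at h2
  -- the total energy is constant with value 0
  set E : ℝ → ℝ := fun t => g t + n t with hEdef
  have hE : ∀ t, HasDerivAt E 0 t := by
    intro t
    have h := (hg t).add (hn t)
    have : 2 * (⟪A t, ω' t⟫_ℂ).re + 2 * (⟪ω'' t, ω' t⟫_ℂ).re = 0 := by
      have : (⟪A t, ω' t⟫_ℂ) = -⟪ω'' t, ω' t⟫_ℂ := by
        simp [hAdef, inner_neg_left]
      rw [this]
      simp
    rwa [this] at h
  have hE0 : E 0 = 0 := by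
    simp only [hEdef, hgdef, hndef, h0, h0', inner_zero_right, inner_zero_left,
      Complex.zero_re, add_zero, zero_add]
  have hEconst : ∀ t, E t = 0 := by
    intro t
    have : E t = E 0 := by
      apply is_const_of_deriv_eq_zero (fun s => (hE s).differentiableAt)
      intro s
      exact (hE s).deriv
    rw [this, hE0]
  -- both energy terms are nonnegative, hence each vanishes
  have hg0 : ∀ t, 0 ≤ g t := fun t => (hnn (u t)).1
  have hn0 : ∀ t, 0 ≤ n t := fun t => by
    have := inner_self_nonneg (𝕜 := ℂ) (x := ω' t)
    simpa [hndef] using this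
  have hω' : ∀ t, ω' t = 0 := by
    intro t
    have hnt : n t = 0 := by
      have := hEconst t
      have h1 := hg0 t
      have h2 := hn0 t
      simp only [hEdef] at this
      linarith
    have : ‖ω' t‖ ^ 2 = 0 := by
      have h := @inner_self_eq_norm_sq ℂ _ _ _ _ (ω' t)
      simp only [hndef] at hnt
      rw [← h]
      simpa using hnt
    have := pow_eq_zero_iff (n := 2) (by norm_num) |>.mp this
    exact norm_eq_zero.mp this
  -- ω has zero derivative, hence is constant, equal to ω 0 = 0
  intro t
  have : ω t = ω 0 := by
    apply is_const_of_deriv_eq_zero (fun s => (hd1 s).differentiableAt)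
    intro s
    have h := hd1 s
    rw [hω' s] at h
    exact h.deriv
  rw [this, h0]

end
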